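/- arXiv:math-ph/0511021 — 3 statements merged into one kernel-verified Lean document; each statement's English description precedes it below -/
import Mathlib

section
/- Let Y : [0,T] → ℝ be an adapted càdlàg semimartingale with Y₀ = 0 whose quadratic variation satisfies [Y,Y]_t = Y_t for all t ∈ [0,T], and which is of finite variation and increasing. Then Y is a pure jump process all of whose jumps have magnitude 1, i.e. Y_t = Σ_{0<s≤t} ΔY_s with ΔY_s ∈ {0,1} for all s. -/
open Set Filter Function Topology

/-- An increasing càdlàg process `Y` with `Y₀ = 0` whose quadratic variation
`[Y,Y]_t = Σ_{0<s≤t}(ΔY_s)²` (finite variation ⇒ quadratic pure jump) satisfies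
`[Y,Y]_t = Y_t`: then `Y` is a pure jump process with jumps of magnitude `1`. -/
theorem stmt6 (T : ℝ) (hT : 0 < T) (Y : ℝ → ℝ) (hY0 : Y 0 = 0)
    (hcadlag : ∀ s : ℝ, ContinuousWithinAt Y (Set.Ici s) s)
    (hmono : MonotoneOn Y (Set.Icc 0 T))
    (QV : ℝ → ℝ)
    -- `Y` is a quadratic pure jump semimartingale
    (hQVjump : ∀ t ∈ Set.Icc 0 T,
      QV t = ∑' s : Set.Ioc (0:ℝ) t, (Y s - Function.leftLim Y s) ^ 2)
    -- the quadratic variation satisfies `[Y,Y]_t = Y_t`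
    (hQVY : ∀ t ∈ Set.Icc 0 T, QV t = Y t) :
    (∀ t ∈ Set.Icc 0 T, Y t = ∑' s : Set.Ioc (0:ℝ) t, (Y s - Function.leftLim Y s)) ∧
    (∀ s ∈ Set.Ioc (0:ℝ) T,
      Y s - Function.leftLim Y s = 0 ∨ Y s - Function.leftLim Y s = 1) := by
  classical
  set f : ℝ → ℝ := fun u => (Y u - Function.leftLim Y u) ^ 2 with hfdef
  have hf0 : ∀ u, 0 ≤ f u := fun u => sq_nonneg _
  -- a globally monotone extension of Y
  set Z : ℝ → ℝ := fun u => Y (min (max u 0) T) with hZdef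
  have hmem : ∀ u : ℝ, min (max u 0) T ∈ Icc (0:ℝ) T := by
    intro u
    exact ⟨le_min (le_max_right _ _) hT.le, min_le_right _ _⟩
  have monoZ : Monotone Z := by
    intro a b hab
    exact hmono (hmem a) (hmem b) (min_le_min (max_le_max hab le_rfl) le_rfl)
  have hZeq : ∀ u ∈ Icc (0:ℝ) T, Z u = Y u := by
    intro u hu
    simp only [hZdef, max_eq_left hu.1, min_eq_left hu.2]
  -- Y t as a tsum of indicators
  have hYeq : ∀ t ∈ Icc (0:ℝ) T, Y t = ∑' u, (Ioc (0:ℝ) t).indicator f u := by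
    intro t ht
    rw [← hQVY t ht, hQVjump t ht, ← tsum_subtype]
  -- key identity: every jump satisfies Δ = Δ²
  have key : ∀ s ∈ Ioc (0:ℝ) T, Y s - Function.leftLim Y s = f s := by
    intro s hs
    have hsIcc : s ∈ Icc (0:ℝ) T := ⟨hs.1.le, hs.2⟩
    have hIoo : Ioo (0:ℝ) s ∈ 𝓝[<] s := Ioo_mem_nhdsLT_of_mem ⟨hs.1, le_refl s⟩
    have hZtend : Tendsto Z (𝓝[<] s) (𝓝 (Function.leftLim Z s)) := monoZ.tendsto_leftLim s
    have hYZ : Y =ᶠ[𝓝[<] s] Z := by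
      filter_upwards [hIoo] with u hu
      exact (hZeq u ⟨hu.1.le, hu.2.le.trans hs.2⟩).symm
    have hYtend : Tendsto Y (𝓝[<] s) (𝓝 (Function.leftLim Z s)) := hZtend.congr' hYZ.symm
    have hne : 𝓝[<] s ≠ ⊥ := (inferInstance : (𝓝[<] s).NeBot).ne
    have hleftYZ : Function.leftLim Y s = Function.leftLim Z s :=
      leftLim_eq_of_tendsto hYtend
    by_cases hsum : Summable ((Ioc (0:ℝ) s).indicator f)
    · have hsubsum : ∀ A : Set ℝ, A ⊆ Ioc (0:ℝ) s → Summable (A.indicator f) := by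
        intro A hA
        have h1 : A.indicator ((Ioc (0:ℝ) s).indicator f) = A.indicator f := by
          rw [Set.indicator_indicator, Set.inter_eq_left.mpr hA]
        rw [← h1]
        exact hsum.indicator A
      set L := Function.leftLim Z s with hL
      set A := ∑' u, (Ioo (0:ℝ) s).indicator f u with hAdef
      have hsumIoo : Summable ((Ioo (0:ℝ) s).indicator f) :=
        hsubsum _ Ioo_subset_Ioc_self
      have hYt : ∀ t ∈ Ioo (0:ℝ) s, Y t ≤ A := by
        intro t ht
        rw [hYeq t ⟨ht.1.le, ht.2.le.trans hs.2⟩]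
        refine Summable.tsum_le_tsum (fun u => ?_) (hsubsum _ (Ioc_subset_Ioc le_rfl ht.2.le)) hsumIoo
        exact Set.indicator_le_indicator_of_subset (show Ioc (0:ℝ) t ⊆ Ioo 0 s from fun u hu => ⟨hu.1, lt_of_le_of_lt hu.2 ht.2⟩) hf0 u
      have hLA : L ≤ A := by
        refine le_of_tendsto hYtend ?_
        filter_upwards [hIoo] with t ht using hYt t ht
      have hAL : A ≤ L := by
        refine Summable.tsum_le_of_sum_le hsumIoo ?_
        intro F
        have hsplitsum : ∑ u ∈ F, (Ioo (0:ℝ) s).indicator f u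
            = ∑ u ∈ F.filter (· ∈ Ioo (0:ℝ) s), f u := by
          rw [Finset.sum_filter]
          refine Finset.sum_congr rfl fun u _ => ?_
          by_cases hu : u ∈ Ioo (0:ℝ) s <;> simp [Set.indicator_apply, hu]
        have h0L : (0:ℝ) ≤ L := by
          have := monoZ.le_leftLim hs.1
          simpa [hZeq 0 ⟨le_refl 0, hT.le⟩, hY0] using this
        rcases (F.filter (· ∈ Ioo (0:ℝ) s)).eq_empty_or_nonempty with hE | hNE
        · rw [hsplitsum, hE, Finset.sum_empty]; exact h0L
        · set t := (F.filter (· ∈ Ioo (0:ℝ) s)).max' hNE with htdef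
          have htmem : t ∈ Ioo (0:ℝ) s := by
            have hmem' := (F.filter (· ∈ Ioo (0:ℝ) s)).max'_mem hNE
            rw [Finset.mem_filter] at hmem'
            exact hmem'.2
          have hstep : ∑ u ∈ F.filter (· ∈ Ioo (0:ℝ) s), f u
              = ∑ u ∈ F.filter (· ∈ Ioo (0:ℝ) s), (Ioc (0:ℝ) t).indicator f u := by
            refine Finset.sum_congr rfl fun u hu => ?_
            have hu' := Finset.mem_filter.mp hu
            have hu2 : u ∈ Ioo (0:ℝ) s := hu'.2
            have hut : u ≤ t := Finset.le_max' _ u hu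
            have humem : u ∈ Ioc (0:ℝ) t := ⟨hu2.1, hut⟩
            rw [Set.indicator_of_mem humem]
          have hsum_t : Summable ((Ioc (0:ℝ) t).indicator f) :=
            hsubsum _ (Ioc_subset_Ioc le_rfl htmem.2.le)
          have hbound : ∑ u ∈ F.filter (· ∈ Ioo (0:ℝ) s), (Ioc (0:ℝ) t).indicator f u
              ≤ ∑' u, (Ioc (0:ℝ) t).indicator f u := by
            refine Summable.sum_le_tsum _ (fun b _ => Set.indicator_nonneg (fun a _ => hf0 a) b) hsum_t
          have hYtL : Y t ≤ L := by
            have := monoZ.le_leftLim htmem.2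
            rwa [hZeq t ⟨htmem.1.le, htmem.2.le.trans hs.2⟩] at this
          calc ∑ u ∈ F, (Ioo (0:ℝ) s).indicator f u
              = ∑ u ∈ F.filter (· ∈ Ioo (0:ℝ) s), f u := hsplitsum
            _ = ∑ u ∈ F.filter (· ∈ Ioo (0:ℝ) s), (Ioc (0:ℝ) t).indicator f u := hstep
            _ ≤ ∑' u, (Ioc (0:ℝ) t).indicator f u := hbound
            _ = Y t := (hYeq t ⟨htmem.1.le, htmem.2.le.trans hs.2⟩).symm
            _ ≤ L := hYtL
      have hAeqL : A = L := le_antisymm hAL hLA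
      have hdisj : Disjoint (Ioo (0:ℝ) s) {s} := by
        simp [Set.disjoint_singleton_right]
      have hsplit : (Ioc (0:ℝ) s).indicator f
          = (Ioo (0:ℝ) s).indicator f + ({s} : Set ℝ).indicator f := by
        rw [← Set.Ioo_union_right hs.1, Set.indicator_union_of_disjoint hdisj]
        rfl
      have hsings : Summable (({s} : Set ℝ).indicator f) := by
        refine hsubsum _ ?_
        intro u hu
        rw [Set.mem_singleton_iff.mp hu]
        exact ⟨hs.1, le_refl s⟩
      have hsingle : ∑' u, ({s} : Set ℝ).indicator f u = f s := by
        rw [tsum_eq_single s]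
        · simp
        · intro b hb
          exact Set.indicator_of_notMem (by simpa using hb) f
      have hYs : Y s = A + f s := by
        rw [hYeq s hsIcc, hsplit]
        simp only [Pi.add_apply]
        rw [Summable.tsum_add hsumIoo hsings, hsingle]
      rw [hleftYZ, hYs, hAeqL]
      ring
    · -- not summable: Y s = 0 and everything vanishes
      have hYs : Y s = 0 := by
        rw [hYeq s hsIcc, tsum_eq_zero_of_not_summable hsum]
      have hzero : ∀ u ∈ Icc (0:ℝ) s, Y u = 0 := by
        intro u hu
        have h1 : Y u ≤ Y s :=
          hmono ⟨hu.1, hu.2.trans hs.2⟩ hsIcc hu.2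
        have h2 : Y 0 ≤ Y u :=
          hmono ⟨le_refl 0, hT.le⟩ ⟨hu.1, hu.2.trans hs.2⟩ hu.1
        rw [hY0] at h2
        rw [hYs] at h1
        linarith
      have hLzero : Function.leftLim Z s = 0 := by
        refine tendsto_nhds_unique hZtend ?_
        refine Tendsto.congr' ?_ (tendsto_const_nhds (α := ℝ) (f := 𝓝[<] s))
        filter_upwards [hIoo] with u hu
        exact (((hZeq u ⟨hu.1.le, hu.2.le.trans hs.2⟩)).trans (hzero u ⟨hu.1.le, hu.2.le⟩)).symm
      rw [hfdef]
      simp only [hleftYZ, hLzero, hYs]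
      norm_num
  constructor
  · intro t ht
    rw [← hQVY t ht, hQVjump t ht]
    refine tsum_congr fun u => ?_
    have hu : (u : ℝ) ∈ Ioc (0:ℝ) T := ⟨u.2.1, u.2.2.trans ht.2⟩
    exact (key u hu).symm
  · intro s hs
    have h : Y s - Function.leftLim Y s = (Y s - Function.leftLim Y s) ^ 2 := key s hs
    have h2 : (Y s - Function.leftLim Y s) * (Y s - Function.leftLim Y s - 1) = 0 := by
      nlinarith [h]
    rcases mul_eq_zero.mp h2 with h3 | h3
    · left; exact h3
    · right; linarith
end

section
/- Positivity of the quantum conditional expectation: Let (A,P) be a quantum probability space, C ⊆ A a commutative von Neumann subalgebra, and A ∈ C' a positive operator (A = B*B for some B ∈ C'). Then P(A|C) ≥ 0 almost surely, i.e. the negative part of the self-adjoint operator P(A|C) is zero P-almost surely. -/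
open scoped ComplexOrder

open Polynomial in
/-- If a closed set contains all real polynomial evaluations at a selfadjoint `M`,
then it contains `cfc f M` for every `f` continuous on the spectrum. -/
lemma aux_cfc_mem {A : Type*} [CStarAlgebra A] {M : A} (hM : IsSelfAdjoint M)
    {S : Set A} (hS : IsClosed S) (hp : ∀ p : ℝ[X], aeval M p ∈ S)
    (f : ℝ → ℝ) (hf : ContinuousOn f (spectrum ℝ M)) : cfc f M ∈ S := by
  rw [cfc_apply f M hM hf]
  have hφ : Continuous (cfcHom hM (R := ℝ)) := (cfcHom_isClosedEmbedding hM).continuous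
  have hcl : closure ((polynomialFunctions (spectrum ℝ M)) : Set C(spectrum ℝ M, ℝ))
      = Set.univ := by
    have h := congrArg (SetLike.coe)
      (polynomialFunctions.topologicalClosure (spectrum ℝ M))
    simpa [Subalgebra.topologicalClosure_coe] using h
  have hsub : ((polynomialFunctions (spectrum ℝ M)) : Set C(spectrum ℝ M, ℝ))
      ⊆ (cfcHom hM (R := ℝ)) ⁻¹' S := by
    intro g hg
    rw [polynomialFunctions_coe] at hg
    obtain ⟨p, rfl⟩ := hg
    have heq : cfcHom hM (R := ℝ) (toContinuousMapOnAlgHom (spectrum ℝ M) p)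
        = aeval M p := by
      rw [← cfc_polynomial p M hM, cfc_apply (R := ℝ) p.eval M hM (by fun_prop)]
      exact congrArg _ (by ext x; simp [Polynomial.toContinuousMapOn,
        Polynomial.toContinuousMap])
    show cfcHom hM (R := ℝ) _ ∈ S
    rw [heq]; exact hp p
  refine closure_minimal hsub (hS.preimage hφ) ?_
  rw [hcl]; trivial

lemma aux_commute {A : Type*} [CStarAlgebra A] {M b : A} (hM : IsSelfAdjoint M)
    (h : Commute b M) (f : ℝ → ℝ) : Commute b (cfc f M) := by
  by_cases hf : ContinuousOn f (spectrum ℝ M)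
  · refine aux_cfc_mem hM (S := {x | Commute b x}) ?_ ?_ f hf
    · have hset : {x : A | Commute b x} = {x : A | b * x - x * b = 0} := by
        ext x; simp [Commute, SemiconjBy, sub_eq_zero]
      rw [hset]
      exact isClosed_eq (by fun_prop) continuous_const
    · intro p
      induction p using Polynomial.induction_on with
      | C r => simpa using (show Commute b (algebraMap ℝ A r) from (Algebra.commutes r b).symm)
      | add p q hp hq => simpa [map_add] using hp.add_right hq
      | monomial n r hp =>
        simp only [map_mul, map_pow, Polynomial.aeval_C, Polynomial.aeval_X]
        have hc : Commute b ((algebraMap ℝ A) r) := (Algebra.commutes r b).symm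
        exact hc.mul_right (h.pow_right _)
  · rw [cfc_apply_of_not_continuousOn M hf]; exact Commute.zero_right b

open Polynomial in
lemma aux_mem {A : Type*} [CStarAlgebra A] (C : StarSubalgebra ℂ A) {M : A}
    (hMC : M ∈ C) (p : ℝ[X]) : aeval M p ∈ C := by
  induction p using Polynomial.induction_on with
  | C r =>
    simpa [IsScalarTower.algebraMap_apply ℝ ℂ A] using C.algebraMap_mem ((r : ℂ))
  | add p q hp hq => simpa [map_add] using add_mem hp hq
  | monomial n r hp =>
    simp only [map_mul, map_pow, aeval_C, aeval_X]
    exact mul_mem (by simpa [IsScalarTower.algebraMap_apply ℝ ℂ A] using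
      C.algebraMap_mem ((r : ℂ))) (pow_mem hMC _)
lemma aux_state_bound {A : Type*} [CStarAlgebra A] (P : A →ₗ[ℂ] ℂ) (hP1 : P 1 = 1)
    (hPpos : ∀ a : A, 0 ≤ P (star a * a)) (x : A) : ‖P x‖ ≤ 2 * ‖x‖ := by
  letI := CStarAlgebra.spectralOrder A
  letI := CStarAlgebra.spectralOrderedRing A
  have hPnn : ∀ y : A, 0 ≤ y → 0 ≤ P y := by
    intro y hy
    rw [StarOrderedRing.nonneg_iff] at hy
    induction hy using AddSubmonoid.closure_induction with
    | mem z hz => obtain ⟨s, rfl⟩ := hz; exact hPpos s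
    | zero => simp
    | add z w _ _ hz hw => rw [map_add]; exact add_nonneg hz hw
  have hPmono : ∀ y z : A, y ≤ z → P y ≤ P z := by
    intro y z h
    have h0 := hPnn _ (sub_nonneg.2 h)
    rw [map_sub] at h0
    exact sub_nonneg.1 h0
  have halg : ∀ r : ℝ, P (algebraMap ℝ A r) = (r : ℂ) := by
    intro r
    rw [IsScalarTower.algebraMap_apply ℝ ℂ A, Algebra.algebraMap_eq_smul_one, map_smul,
      hP1, smul_eq_mul, mul_one, Complex.coe_algebraMap]
  have hsab : ∀ y : A, IsSelfAdjoint y → ‖P y‖ ≤ ‖y‖ := by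
    intro y hy
    have h1 : P y ≤ (‖y‖ : ℂ) := by
      have := hPmono _ _ hy.le_algebraMap_norm_self
      rwa [halg] at this
    have h2 : (-(‖y‖:ℂ)) ≤ P y := by
      have := hPmono _ _ hy.neg_algebraMap_norm_le_self
      rwa [map_neg, halg] at this
    have him : (P y).im = 0 := (Complex.le_def.mp h1).2
    have hPyre : P y = ((P y).re : ℂ) := Complex.ext rfl (by simp [him])
    rw [hPyre, Complex.norm_real, Real.norm_eq_abs]
    refine abs_le.2 ⟨?_, ?_⟩
    · have := (Complex.le_def.mp h2).1; simpa using this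
    · have := (Complex.le_def.mp h1).1; simpa using this
  obtain ⟨h, hh⟩ : ∃ h' : A, h' = (1/2 : ℂ) • (x + star x) := ⟨_, rfl⟩
  obtain ⟨k, hk⟩ : ∃ k' : A, k' = (-(Complex.I/2)) • (x - star x) := ⟨_, rfl⟩
  have hhsa : IsSelfAdjoint h := by
    rw [hh, IsSelfAdjoint, star_smul, star_add, star_star]
    have h1 : star ((1:ℂ)/2) = (1:ℂ)/2 := by
      simp [Complex.star_def, map_div₀]
    rw [h1, add_comm]
  have hksa : IsSelfAdjoint k := by
    rw [hk, IsSelfAdjoint, star_smul, star_sub, star_star]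
    have h1 : star (-(Complex.I/2)) = Complex.I/2 := by
      rw [star_neg, star_div₀, Complex.star_def, Complex.conj_I, map_ofNat]
      ring
    rw [h1, show (Complex.I/2) • (star x - x) = (-(Complex.I/2)) • (x - star x) by
      rw [neg_smul, ← smul_neg, neg_sub]]
  have hxhk : x = h + Complex.I • k := by
    have hIk : Complex.I • k = (1/2 : ℂ) • (x - star x) := by
      rw [hk, smul_smul]
      congr 1
      rw [mul_neg, ← mul_div_assoc, Complex.I_mul_I]
      norm_num
    rw [hIk, hh]
    module
  have hnh : ‖h‖ ≤ ‖x‖ := by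
    rw [hh, norm_smul]
    have hb : ‖x + star x‖ ≤ ‖x‖ + ‖x‖ := (norm_add_le _ _).trans (by simp)
    have hn : ‖(1/2 : ℂ)‖ = 1/2 := by norm_num
    rw [hn]
    nlinarith [norm_nonneg (x + star x), norm_nonneg x]
  have hnk : ‖k‖ ≤ ‖x‖ := by
    rw [hk, norm_smul]
    have hb : ‖x - star x‖ ≤ ‖x‖ + ‖x‖ := (norm_sub_le _ _).trans (by simp)
    have hn : ‖(-(Complex.I/2) : ℂ)‖ = 1/2 := by
      rw [norm_neg, norm_div, Complex.norm_I]
      norm_num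
    rw [hn]
    nlinarith [norm_nonneg (x - star x), norm_nonneg x]
  calc ‖P x‖ = ‖P h + Complex.I * P k‖ := by
        rw [hxhk, map_add, map_smul, smul_eq_mul]
  _ ≤ ‖P h‖ + ‖Complex.I * P k‖ := norm_add_le _ _
  _ = ‖P h‖ + ‖P k‖ := by simp
  _ ≤ ‖x‖ + ‖x‖ := add_le_add ((hsab h hhsa).trans hnh) ((hsab k hksa).trans hnk)
  _ = 2 * ‖x‖ := by ring

open Polynomial

/-- Positivity of the quantum conditional expectation: if `a = B*B` is positive
with `B ∈ C'`, then `P(a|C) ≥ 0` almost surely, i.e. the negative part of the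
self-adjoint operator `P(a|C)` (defined by functional calculus) is zero
`P`-almost surely. -/
theorem stmt16 {A : Type*} [CStarAlgebra A]
    (P : A →ₗ[ℂ] ℂ) (hP1 : P 1 = 1)
    (hPpos : ∀ a : A, 0 ≤ P (star a * a))
    (C : StarSubalgebra ℂ A)
    (hComm : ∀ x ∈ C, ∀ y ∈ C, x * y = y * x)
    (E : A → A)
    (hE : ∀ a, (∀ c ∈ C, a * c = c * a) →
      E a ∈ C ∧ ∀ c ∈ C, P (E a * c) = P (a * c))
    (a B : A) (hB : ∀ c ∈ C, B * c = c * B) (ha : a = star B * B)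
    (hsa : IsSelfAdjoint (E a)) :
    P (star (cfc (fun r : ℝ => max (-r) 0) (E a)) *
        cfc (fun r : ℝ => max (-r) 0) (E a)) = 0 := by
  -- main proof
  have hPcont : Continuous P :=
    AddMonoidHomClass.continuous_of_bound P 2 (aux_state_bound P hP1 hPpos)
  have haC : ∀ c ∈ C, a * c = c * a := by
    intro c hc
    have h1 : B * c = c * B := hB c hc
    have h2 : star B * c = c * star B := by
      have h3 := hB (star c) (star_mem hc)
      have h4 := congrArg star h3
      simpa [star_mul] using h4.symm
    rw [ha, mul_assoc, h1, ← mul_assoc, h2, mul_assoc]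
  obtain ⟨hMC, hMkey⟩ := hE a haC
  set M : A := E a with hMdef
  set N : A := cfc (fun r : ℝ => max (-r) 0) M with hN
  have hfc : ContinuousOn (fun r : ℝ => max (-r) 0) (spectrum ℝ M) := by fun_prop
  have hgc : ContinuousOn (fun r : ℝ => Real.sqrt (max (-r) 0)) (spectrum ℝ M) := by
    fun_prop
  have hNsa : IsSelfAdjoint N := cfc_predicate _ M
  set R : A := cfc (fun r : ℝ => Real.sqrt (max (-r) 0)) M with hR
  have hRsa : IsSelfAdjoint R := cfc_predicate _ M
  have hRR : R * R = N := by
    rw [hR, hN, ← cfc_mul (fun r : ℝ => Real.sqrt (max (-r) 0))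
      (fun r : ℝ => Real.sqrt (max (-r) 0)) M hgc hgc]
    exact cfc_congr fun r _ => Real.mul_self_sqrt (le_max_right _ _)
  have hMN : M * N = -(N * N) := by
    have h1 : cfc (fun r : ℝ => r * (max (-r) 0)) M = M * N := by
      rw [cfc_mul (fun r : ℝ => r) (fun r : ℝ => max (-r) 0) M (by fun_prop) hfc,
        cfc_id' ℝ M hsa, ← hN]
    have h2 : cfc (fun r : ℝ => -(max (-r) 0 * max (-r) 0)) M = -(N * N) := by
      rw [cfc_neg (fun r : ℝ => max (-r) 0 * max (-r) 0) M,
        cfc_mul (fun r : ℝ => max (-r) 0) (fun r : ℝ => max (-r) 0) M hfc hfc, ← hN]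
    rw [← h1, ← h2]
    refine cfc_congr fun r _ => ?_
    rcases le_total r 0 with h | h
    · rw [max_eq_left (by linarith)]; ring
    · rw [max_eq_right (by linarith)]; ring
  have hBM : Commute B M := hB M hMC
  have hB'M : Commute (star B) M := by
    have h3 := hBM.star_star
    rwa [hsa.star_eq] at h3
  have hBR : Commute B R := hR ▸ aux_commute hsa hBM _
  have hB'R : Commute (star B) R := hR ▸ aux_commute hsa hB'M _
  have key : a * N = star (B * R) * (B * R) := by
    rw [← hRR, ha, star_mul, hRsa.star_eq]
    calc star B * B * (R * R) = star B * (B * R) * R := by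
          rw [mul_assoc (star B) B (R * R), ← mul_assoc B R R,
            ← mul_assoc (star B) (B * R) R]
    _ = star B * (R * B) * R := by rw [hBR.eq]
    _ = star B * R * (B * R) := by
          rw [← mul_assoc (star B) R B, mul_assoc (star B * R) B R]
    _ = R * star B * (B * R) := by rw [hB'R.eq]
  have hPos1 : 0 ≤ P (a * N) := by rw [key]; exact hPpos (B * R)
  have hPos2 : 0 ≤ P (N * N) := by
    have h5 := hPpos N
    rwa [hNsa.star_eq] at h5
  have hSclosed : IsClosed {x : A | P (M * x) = P (a * x)} :=
    isClosed_eq (hPcont.comp (continuous_const.mul continuous_id))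
      (hPcont.comp (continuous_const.mul continuous_id))
  have hpoly : ∀ p : ℝ[X], aeval M p ∈ {x : A | P (M * x) = P (a * x)} :=
    fun p => hMkey _ (aux_mem C hMC p)
  have hPMN : P (M * N) = P (a * N) := by
    have h6 := aux_cfc_mem hsa hSclosed hpoly (fun r : ℝ => max (-r) 0) hfc
    rw [hN]
    exact h6
  have hNNeq : P (N * N) = -(P (a * N)) := by
    have h7 : N * N = -(M * N) := by rw [hMN, neg_neg]
    rw [h7, map_neg, hPMN]
  have hle : P (N * N) ≤ 0 := by
    rw [hNNeq]
    exact neg_nonpos.2 hPos1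
  have hzero : P (N * N) = 0 := le_antisymm hle hPos2
  rw [hNsa.star_eq]
  exact hzero
end

section
/- Uniqueness of the normalized filter given uniqueness of the linear filter: Let τ : [0,T]×Ω → M_n(ℂ) be the unique solution of a linear matrix SDE with τ₀ = ρ₀ a density matrix, with τ_t positive and nonzero a.s. for every t. Suppose ρ̄ is any adapted M_n(ℂ)-valued process with ρ̄₀ = ρ₀, Tr[ρ̄_t] = 1 a.s. for all t, and suppose there exists a strictly positive scalar adapted process Π̄ with Π̄₀ = 1 such that Π̄_t ρ̄_t solves the same linear SDE as τ. Then ρ̄_t = τ_t/Tr[τ_t] a.s. for every t ∈ [0,T]. -/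
/-!
`Π̄ ρ̄` solves the linear equation, so by uniqueness `Π̄_t ρ̄_t = τ_t` a.s.; taking traces and
using `Tr ρ̄_t = 1` identifies the normalizing factor `Π̄_t = Tr τ_t`, which is nonzero since
`Π̄_t > 0`, hence `ρ̄_t = τ_t / Tr τ_t`.
-/

open Matrix MeasureTheory
open scoped ComplexOrder

theorem Matrix.eq_inv_trace_smul_of_smul_eq {ι K : Type*} [Fintype ι] [Field K]
    {A B : Matrix ι ι K} {c : K} (hA : A.trace = 1) (hc : c ≠ 0) (h : c • A = B) :
    A = B.trace⁻¹ • B := by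
  have htrace : B.trace = c := by rw [← h, trace_smul, hA, smul_eq_mul, mul_one]
  rw [htrace, ← h, smul_smul, inv_mul_cancel₀ hc, one_smul]

theorem stmt18_general {Ω : Type*} [MeasurableSpace Ω] (P : Measure Ω)
    {n : ℕ} (T : ℝ)
    -- `Sol σ` means "σ solves the linear matrix SDE"
    (Sol : (ℝ → Ω → Matrix (Fin n) (Fin n) ℂ) → Prop)
    (τ : ℝ → Ω → Matrix (Fin n) (Fin n) ℂ)
    -- `τ` is the unique solution
    (huniq : ∀ σ, Sol σ → ∀ t ∈ Set.Icc 0 T, σ t =ᵐ[P] τ t)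
    (ρ' : ℝ → Ω → Matrix (Fin n) (Fin n) ℂ)
    (hρ'tr : ∀ t ∈ Set.Icc 0 T, ∀ᵐ ω ∂P, (ρ' t ω).trace = 1)
    (Pi' : ℝ → Ω → ℝ) (hPipos : ∀ t ω, 0 < Pi' t ω)
    (hPirhosol : Sol (fun t ω => (Pi' t ω : ℂ) • ρ' t ω)) :
    ∀ t ∈ Set.Icc 0 T, ∀ᵐ ω ∂P,
      ρ' t ω = ((τ t ω).trace)⁻¹ • τ t ω := by
  intro t ht
  filter_upwards [huniq _ hPirhosol t ht, hρ'tr t ht] with ω hsol htrace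
  exact eq_inv_trace_smul_of_smul_eq htrace (Complex.ofReal_ne_zero.mpr (hPipos t ω).ne') hsol

/-- Uniqueness of the normalized filter given uniqueness of the linear filter:
if `τ` is the unique solution of the linear (unnormalized) filtering equation,
a.s. positive and nonzero, and `ρ̄` is a trace-one process such that `Π̄ ρ̄`
solves the same linear equation for some strictly positive scalar process `Π̄`
with `Π̄₀ = 1`, then `ρ̄_t = τ_t / Tr[τ_t]` a.s. for every `t ∈ [0,T]`. -/
theorem stmt18 {Ω : Type*} [MeasurableSpace Ω] (P : Measure Ω)
    [IsProbabilityMeasure P] {n : ℕ} (T : ℝ) (hT : 0 ≤ T)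
    -- `Sol σ` means "σ solves the linear matrix SDE"
    (Sol : (ℝ → Ω → Matrix (Fin n) (Fin n) ℂ) → Prop)
    (τ : ℝ → Ω → Matrix (Fin n) (Fin n) ℂ)
    (ρ₀ : Matrix (Fin n) (Fin n) ℂ) (hρ₀ : ρ₀.PosSemidef ∧ ρ₀.trace = 1)
    (hτsol : Sol τ) (hτ0 : ∀ ω, τ 0 ω = ρ₀)
    -- `τ` is the unique solution
    (huniq : ∀ σ, Sol σ → ∀ t ∈ Set.Icc 0 T, σ t =ᵐ[P] τ t)
    (hτpos : ∀ t ∈ Set.Icc 0 T, ∀ᵐ ω ∂P, (τ t ω).PosSemidef ∧ τ t ω ≠ 0)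
    (ρ' : ℝ → Ω → Matrix (Fin n) (Fin n) ℂ) (hρ'0 : ∀ ω, ρ' 0 ω = ρ₀)
    (hρ'tr : ∀ t ∈ Set.Icc 0 T, ∀ᵐ ω ∂P, (ρ' t ω).trace = 1)
    (Pi' : ℝ → Ω → ℝ) (hPipos : ∀ t ω, 0 < Pi' t ω) (hPi0 : ∀ ω, Pi' 0 ω = 1)
    (hPirhosol : Sol (fun t ω => (Pi' t ω : ℂ) • ρ' t ω)) :
    ∀ t ∈ Set.Icc 0 T, ∀ᵐ ω ∂P,
      ρ' t ω = ((τ t ω).trace)⁻¹ • τ t ω :=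
  stmt18_general P T Sol τ huniq ρ' hρ'tr Pi' hPipos hPirhosol
end
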